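/- Let X, Y0, Y1 be finite nonempty sets and Ψ a relation on probability distributions over X. Let A0 : X → D(Y0) and A1 : Y0 × X → D(Y1) be mechanisms, and define the sequential composition with independent inputs (A1 ⊛ A0) : X×X → D(Y1) by (A1 ⊛ A0)(x0,x1)[R] = ∑_{y0} A0(x0)[y0]·A1(y0,x1)[R]. If A0 provides (ε0,δ0)-distribution privacy with respect to Ψ, and for every y0 ∈ Y0 the mechanism x ↦ A1(y0,x) provides (ε1,δ1)-distribution privacy with respect to Ψ, then A1 ⊛ A0 provides (ε0+ε1, δ0+δ1)-distribution privacy with respect to Ψ ⋄ Ψ, where Ψ ⋄ Ψ = { (λ0×λ1, λ0'×λ1') : (λ0,λ0') ∈ Ψ, (λ1,λ1') ∈ Ψ } and λ0×λ1 denotes the product distribution on X×X. -/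
import Mathlib


/-!
Common definitions: probability distributions on finite sets, mechanisms,
liftings, couplings, lifted relations, Wasserstein metric, privacy notions.
-/

/-- `l` is a probability distribution on the finite set `X`. -/
def IsDist {X : Type*} [Fintype X] (l : X → ℝ) : Prop :=
  (∀ x, 0 ≤ l x) ∧ ∑ x, l x = 1

/-- `A` is a mechanism from `X` to `Y`: each `A x` is a distribution on `Y`. -/
def IsMech {X Y : Type*} [Fintype X] [Fintype Y] (A : X → Y → ℝ) : Prop :=
  ∀ x, IsDist (A x)

/-- Probability that a distribution `μ` assigns to a set `R`. -/
def probOf {Y : Type*} (μ : Y → ℝ) (R : Finset Y) : ℝ := ∑ y ∈ R, μ y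

/-- The lifting `A#` of a mechanism `A`, applied to an input distribution `l`. -/
def liftDist {X Y : Type*} [Fintype X] (A : X → Y → ℝ) (l : X → ℝ) : Y → ℝ :=
  fun y => ∑ x, l x * A x y

/-- `γ` is a coupling of `l0` and `l1`. -/
def IsCoupling {X : Type*} [Fintype X] (γ : X × X → ℝ) (l0 l1 : X → ℝ) : Prop :=
  IsDist γ ∧ (∀ x0, l0 x0 = ∑ x1, γ (x0, x1)) ∧ (∀ x1, l1 x1 = ∑ x0, γ (x0, x1))

/-- The lifted relation `Φ#` on distributions. -/
def liftRel {X : Type*} [Fintype X] (Φ : Finset (X × X)) (l0 l1 : X → ℝ) : Prop :=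
  IsDist l0 ∧ IsDist l1 ∧ ∃ γ, IsCoupling γ l0 l1 ∧ ∀ p, 0 < γ p → p ∈ Φ

/-- The largest move `max_{(x0,x1) ∈ supp γ} d x0 x1` of a coupling `γ`. -/
noncomputable def maxCost {X : Type*} (d : X → X → ℝ) (γ : X × X → ℝ) : ℝ :=
  sSup {r | ∃ p : X × X, 0 < γ p ∧ r = d p.1 p.2}

/-- The ∞-Wasserstein metric w.r.t. `d`. -/
noncomputable def Winf {X : Type*} [Fintype X] (d : X → X → ℝ) (l0 l1 : X → ℝ) : ℝ :=
  sInf {r | ∃ γ, IsCoupling γ l0 l1 ∧ maxCost d γ = r}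

/-- The relation `Φ#∞`: pairs of distributions admitting a coupling supported in `Φ`
that attains the ∞-Wasserstein metric. -/
def liftRelInf {X : Type*} [Fintype X] (d : X → X → ℝ) (Φ : Finset (X × X))
    (l0 l1 : X → ℝ) : Prop :=
  IsDist l0 ∧ IsDist l1 ∧
    ∃ γ, IsCoupling γ l0 l1 ∧ (∀ p, 0 < γ p → p ∈ Φ) ∧ maxCost d γ = Winf d l0 l1

/-- `d` is a metric on `X`. -/
structure IsMetric {X : Type*} (d : X → X → ℝ) : Prop where
  nonneg : ∀ x y, 0 ≤ d x y
  eq_zero_iff : ∀ x y, d x y = 0 ↔ x = y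
  symm : ∀ x y, d x y = d y x
  triangle : ∀ x y z, d x z ≤ d x y + d y z

/-- `(ε,δ)`-differential privacy of `A` w.r.t. the adjacency relation `Φ`. -/
def DP {X Y : Type*} (A : X → Y → ℝ) (Φ : Finset (X × X)) (ε δ : ℝ) : Prop :=
  ∀ p ∈ Φ, ∀ R : Finset Y, probOf (A p.1) R ≤ Real.exp ε * probOf (A p.2) R + δ

/-- `(ε,d,δ)`-extended differential privacy of `A` w.r.t. `Φ`. -/
def XDP {X Y : Type*} (A : X → Y → ℝ) (Φ : Finset (X × X)) (ε : ℝ)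
    (d : X → X → ℝ) (δ : ℝ) : Prop :=
  ∀ p ∈ Φ, ∀ R : Finset Y,
    probOf (A p.1) R ≤ Real.exp (ε * d p.1 p.2) * probOf (A p.2) R + δ

/-- `(ε,δ)`-distribution privacy of `M` w.r.t. a relation `Ψ` on distributions. -/
def DistP {X Z : Type*} [Fintype X] (M : X → Z → ℝ)
    (Ψ : (X → ℝ) → (X → ℝ) → Prop) (ε δ : ℝ) : Prop :=
  ∀ l0 l1, Ψ l0 l1 → ∀ R : Finset Z,
    probOf (liftDist M l0) R ≤ Real.exp ε * probOf (liftDist M l1) R + δ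

/-- `(ε,D,δ)`-extended distribution privacy of `M` w.r.t. `Ψ`. -/
def XDistP {X Z : Type*} [Fintype X] (M : X → Z → ℝ)
    (Ψ : (X → ℝ) → (X → ℝ) → Prop) (ε : ℝ) (D : (X → ℝ) → (X → ℝ) → ℝ) (δ : ℝ) : Prop :=
  ∀ l0 l1, Ψ l0 l1 → ∀ R : Finset Z,
    probOf (liftDist M l0) R ≤ Real.exp (ε * D l0 l1) * probOf (liftDist M l1) R + δ

/-- `(ε,δ)`-probabilistic distribution privacy of `M` w.r.t. `Ψ`. -/
def pDistP {X Z : Type*} [Fintype X] [DecidableEq Z] (M : X → Z → ℝ)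
    (Ψ : (X → ℝ) → (X → ℝ) → Prop) (ε δ : ℝ) : Prop :=
  ∀ l0 l1, Ψ l0 l1 → ∃ R' : Finset Z,
    probOf (liftDist M l0) R' ≤ δ ∧ probOf (liftDist M l1) R' ≤ δ ∧
    ∀ R : Finset Z,
      probOf (liftDist M l0) (R \ R') ≤ Real.exp ε * probOf (liftDist M l1) (R \ R') ∧
      probOf (liftDist M l1) (R \ R') ≤ Real.exp ε * probOf (liftDist M l0) (R \ R')

/-- The uniform distribution on a finite set `Y`. -/
noncomputable def uniformDist (Y : Type*) [Fintype Y] : Y → ℝ :=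
  fun _ => (Fintype.card Y : ℝ)⁻¹

/-- The `(k,ν,A)`-tupling mechanism from `X` to `Y^(k+1)`. -/
noncomputable def tupling {X Y : Type*} [Fintype Y] (k : ℕ) (ν : Y → ℝ) (A : X → Y → ℝ) :
    X → (Fin (k + 1) → Y) → ℝ :=
  fun x yb => ((k : ℝ) + 1)⁻¹ *
    ∑ i : Fin (k + 1), A x (yb i) * ∏ j ∈ Finset.univ.erase i, ν (yb j)

/-- The set of distributions `Λ_{β,η,A}`. -/
def Lam {X Y : Type*} [Fintype X] [Fintype Y] (β η : ℝ) (A : X → Y → ℝ)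
    (l : X → ℝ) : Prop :=
  IsDist l ∧ (1 - η) * (Fintype.card Y : ℝ) ≤ ({y : Y | liftDist A l y ≤ β}.ncard : ℝ)

/-- The product distribution `λ0 × λ1` on `X × X`. -/
def prodDist {X : Type*} (l0 l1 : X → ℝ) : X × X → ℝ := fun p => l0 p.1 * l1 p.2

/-- Sequential composition with shared input. -/
def compShared {X Y0 Y1 : Type*} [Fintype Y0] (A0 : X → Y0 → ℝ)
    (A1 : Y0 → X → Y1 → ℝ) : X → Y1 → ℝ :=
  fun x y1 => ∑ y0, A0 x y0 * A1 y0 x y1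

/-- Sequential composition with independent inputs. -/
def compInd {X Y0 Y1 : Type*} [Fintype Y0] (A0 : X → Y0 → ℝ)
    (A1 : Y0 → X → Y1 → ℝ) : X × X → Y1 → ℝ :=
  fun p y1 => ∑ y0, A0 p.1 y0 * A1 y0 p.2 y1

/-- Post-processing composition. -/
def postProc {X Y Z : Type*} [Fintype Y] (A0 : X → Y → ℝ) (A1 : Y → Z → ℝ) :
    X → Z → ℝ :=
  fun x z => ∑ y, A0 x y * A1 y z

/-- The point distribution at `x`. -/
def pointDist {X : Type*} [DecidableEq X] (x : X) : X → ℝ :=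
  fun x' => if x' = x then 1 else 0

lemma liftDist_isDist' {X Y : Type*} [Fintype X] [Fintype Y] {A : X → Y → ℝ}
    (hA : IsMech A) {l : X → ℝ} (hl : IsDist l) : IsDist (liftDist A l) := by
  constructor
  · intro y
    exact Finset.sum_nonneg fun x _ => mul_nonneg (hl.1 x) ((hA x).1 y)
  · unfold liftDist
    rw [Finset.sum_comm]
    calc ∑ x, ∑ y, l x * A x y = ∑ x : X, l x * ∑ y, A x y := by
          simp [Finset.mul_sum]
      _ = ∑ x, l x := by
          refine Finset.sum_congr rfl fun x _ => ?_
          rw [(hA x).2, mul_one]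
      _ = 1 := hl.2

lemma probOf_nonneg' {Y : Type*} {μ : Y → ℝ} (hμ : ∀ y, 0 ≤ μ y) (R : Finset Y) :
    0 ≤ probOf μ R :=
  Finset.sum_nonneg fun y _ => hμ y

lemma probOf_le_one' {Y : Type*} [Fintype Y] {μ : Y → ℝ} (hμ : IsDist μ) (R : Finset Y) :
    probOf μ R ≤ 1 := by
  calc probOf μ R ≤ ∑ y, μ y :=
        Finset.sum_le_sum_of_subset_of_nonneg (Finset.subset_univ R)
          (fun y _ _ => hμ.1 y)
    _ = 1 := hμ.2

/-- Key lemma: from set-wise bounds to bounds on expectations of `[0,1]`-valued functions. -/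
lemma weighted_bound' {Y : Type*} [Fintype Y] (μ μ' f : Y → ℝ) (c δ : ℝ)
    (hf0 : ∀ y, 0 ≤ f y) (hf1 : ∀ y, f y ≤ 1)
    (h : ∀ R : Finset Y, probOf μ R ≤ c * probOf μ' R + δ) :
    ∑ y, μ y * f y ≤ c * ∑ y, μ' y * f y + δ := by
  classical
  have key : ∑ y, (μ y - c * μ' y) * f y ≤ δ := by
    set S : Finset Y := Finset.univ.filter (fun y => c * μ' y < μ y) with hSdef
    have hsplit : ∑ y, (μ y - c * μ' y) * f y
        = ∑ y ∈ S, (μ y - c * μ' y) * f y + ∑ y ∈ Sᶜ, (μ y - c * μ' y) * f y :=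
      (Finset.sum_add_sum_compl S _).symm
    have h1 : ∑ y ∈ S, (μ y - c * μ' y) * f y ≤ ∑ y ∈ S, (μ y - c * μ' y) := by
      refine Finset.sum_le_sum fun y hy => ?_
      have hyS : c * μ' y < μ y := by
        simpa [hSdef] using hy
      exact mul_le_of_le_one_right (by linarith) (hf1 y)
    have h2 : ∑ y ∈ Sᶜ, (μ y - c * μ' y) * f y ≤ 0 := by
      refine Finset.sum_nonpos fun y hy => ?_
      have hyS : ¬ (c * μ' y < μ y) := by
        intro hc
        exact (Finset.mem_compl.mp hy) (by simp [hSdef, hc])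
      exact mul_nonpos_of_nonpos_of_nonneg (by linarith [not_lt.mp hyS]) (hf0 y)
    have h3 : ∑ y ∈ S, (μ y - c * μ' y) ≤ δ := by
      have := h S
      have hexp : ∑ y ∈ S, (μ y - c * μ' y) = probOf μ S - c * probOf μ' S := by
        simp [probOf, Finset.sum_sub_distrib, Finset.mul_sum]
      linarith
    linarith [hsplit, h1, h2, h3]
  have heq : ∑ y, μ y * f y - c * ∑ y, μ' y * f y = ∑ y, (μ y - c * μ' y) * f y := by
    rw [Finset.mul_sum, ← Finset.sum_sub_distrib]
    exact Finset.sum_congr rfl fun y _ => by ring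
  linarith

lemma probOf_liftDist' {X Y : Type*} [Fintype X] (A : X → Y → ℝ) (l : X → ℝ)
    (R : Finset Y) : probOf (liftDist A l) R = ∑ x, l x * probOf (A x) R := by
  unfold probOf liftDist
  conv_lhs => rw [Finset.sum_comm]
  simp [Finset.mul_sum]

lemma triple_swap' {α β γ : Type*} [Fintype α] [Fintype β] [Fintype γ]
    (F : α → β → γ → ℝ) :
    ∑ x, ∑ y, ∑ z, F x y z = ∑ z, ∑ x, ∑ y, F x y z := by
  calc ∑ x, ∑ y, ∑ z, F x y z
      = ∑ x, ∑ z, ∑ y, F x y z := Finset.sum_congr rfl fun x _ => Finset.sum_comm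
    _ = ∑ z, ∑ x, ∑ y, F x y z := Finset.sum_comm

lemma compInd_lift_eq {X Y0 Y1 : Type*} [Fintype X] [Fintype Y0] [Fintype Y1]
    (A0 : X → Y0 → ℝ) (A1 : Y0 → X → Y1 → ℝ) (a b : X → ℝ) (R : Finset Y1) :
    probOf (liftDist (compInd A0 A1) (prodDist a b)) R
      = ∑ y0, liftDist A0 a y0 * probOf (liftDist (A1 y0) b) R := by
  have hsub : ∀ p : X × X, probOf (compInd A0 A1 p) R
      = ∑ y0, A0 p.1 y0 * probOf (A1 y0 p.2) R := by
    intro p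
    unfold compInd probOf
    conv_lhs => rw [Finset.sum_comm]
    simp [Finset.mul_sum]
  calc probOf (liftDist (compInd A0 A1) (prodDist a b)) R
      = ∑ p : X × X, prodDist a b p * probOf (compInd A0 A1 p) R :=
        probOf_liftDist' _ _ _
    _ = ∑ x0, ∑ x1, ∑ y0, a x0 * b x1 * (A0 x0 y0 * probOf (A1 y0 x1) R) := by
        rw [Fintype.sum_prod_type]
        refine Finset.sum_congr rfl fun x0 _ => Finset.sum_congr rfl fun x1 _ => ?_
        rw [hsub (x0, x1)]
        simp only [prodDist, Finset.mul_sum]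
    _ = ∑ y0, ∑ x0, ∑ x1, a x0 * b x1 * (A0 x0 y0 * probOf (A1 y0 x1) R) :=
        triple_swap' _
    _ = ∑ y0, liftDist A0 a y0 * probOf (liftDist (A1 y0) b) R := by
        refine Finset.sum_congr rfl fun y0 _ => ?_
        rw [probOf_liftDist' (A1 y0) b R]
        unfold liftDist
        rw [Finset.sum_mul]
        refine Finset.sum_congr rfl fun x0 _ => ?_
        rw [Finset.mul_sum]
        exact Finset.sum_congr rfl fun x1 _ => by ring

/-- sequential composition (independent inputs) of DistP mechanisms. -/
theorem seq_comp_ind_distP {X Y0 Y1 : Type*} [Fintype X] [Fintype Y0] [Fintype Y1]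
    [Nonempty X] [Nonempty Y0] [Nonempty Y1]
    (ε0 ε1 δ0 δ1 : ℝ) (hε0 : 0 ≤ ε0) (hε1 : 0 ≤ ε1)
    (hδ0 : 0 ≤ δ0) (hδ0' : δ0 ≤ 1) (hδ1 : 0 ≤ δ1) (hδ1' : δ1 ≤ 1)
    (Ψ : (X → ℝ) → (X → ℝ) → Prop) (hΨ : ∀ l l', Ψ l l' → IsDist l ∧ IsDist l')
    (A0 : X → Y0 → ℝ) (hA0 : IsMech A0)
    (A1 : Y0 → X → Y1 → ℝ) (hA1 : ∀ y0, IsMech (A1 y0))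
    (h0 : DistP A0 Ψ ε0 δ0)
    (h1 : ∀ y0, DistP (A1 y0) Ψ ε1 δ1) :
    DistP (compInd A0 A1)
      (fun μ0 μ1 => ∃ l0 l0' l1 l1', Ψ l0 l0' ∧ Ψ l1 l1' ∧
        μ0 = prodDist l0 l1 ∧ μ1 = prodDist l0' l1')
      (ε0 + ε1) (δ0 + δ1) := by
  rintro μ0 μ1 ⟨l0, l0', l1, l1', hψ0, hψ1, rfl, rfl⟩ R
  obtain ⟨hl0, hl0'⟩ := hΨ _ _ hψ0
  obtain ⟨hl1, hl1'⟩ := hΨ _ _ hψ1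
  rw [compInd_lift_eq, compInd_lift_eq]
  set w : Y0 → ℝ := liftDist A0 l0 with hw
  set w' : Y0 → ℝ := liftDist A0 l0' with hw'
  set q : Y0 → ℝ := fun y0 => probOf (liftDist (A1 y0) l1) R with hq
  set q' : Y0 → ℝ := fun y0 => probOf (liftDist (A1 y0) l1') R with hq'
  have hwD : IsDist w := liftDist_isDist' hA0 hl0
  have hw'D : IsDist w' := liftDist_isDist' hA0 hl0'
  have hq0 : ∀ y0, 0 ≤ q y0 :=
    fun y0 => probOf_nonneg' (liftDist_isDist' (hA1 y0) hl1).1 R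
  have hq1 : ∀ y0, q y0 ≤ 1 :=
    fun y0 => probOf_le_one' (liftDist_isDist' (hA1 y0) hl1) R
  have hq'0 : ∀ y0, 0 ≤ q' y0 :=
    fun y0 => probOf_nonneg' (liftDist_isDist' (hA1 y0) hl1').1 R
  have hstep1 : ∀ y0, q y0 ≤ Real.exp ε1 * q' y0 + δ1 :=
    fun y0 => h1 y0 l1 l1' hψ1 R
  -- g = min(q, e^{ε1} q')
  set g : Y0 → ℝ := fun y0 => min (q y0) (Real.exp ε1 * q' y0) with hg
  have hg0 : ∀ y0, 0 ≤ g y0 :=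
    fun y0 => le_min (hq0 y0) (mul_nonneg (Real.exp_nonneg ε1) (hq'0 y0))
  have hg1 : ∀ y0, g y0 ≤ 1 := fun y0 => le_trans (min_le_left _ _) (hq1 y0)
  have hqg : ∀ y0, q y0 ≤ g y0 + δ1 := by
    intro y0
    have : q y0 - δ1 ≤ min (q y0) (Real.exp ε1 * q' y0) :=
      le_min (by linarith) (by linarith [hstep1 y0])
    simpa [hg] using by linarith [this]
  -- step A : ∑ w q ≤ ∑ w g + δ1
  have stepA : ∑ y0, w y0 * q y0 ≤ (∑ y0, w y0 * g y0) + δ1 := by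
    have : ∑ y0, w y0 * q y0 ≤ ∑ y0, (w y0 * g y0 + w y0 * δ1) := by
      refine Finset.sum_le_sum fun y0 _ => ?_
      have := hqg y0
      nlinarith [hwD.1 y0]
    have hsum : ∑ y0, (w y0 * g y0 + w y0 * δ1)
        = (∑ y0, w y0 * g y0) + δ1 := by
      rw [Finset.sum_add_distrib, ← Finset.sum_mul, hwD.2, one_mul]
    linarith [hsum ▸ this]
  -- step B : ∑ w g ≤ e^{ε0} ∑ w' g + δ0
  have stepB : ∑ y0, w y0 * g y0 ≤ Real.exp ε0 * ∑ y0, w' y0 * g y0 + δ0 :=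
    weighted_bound' w w' g (Real.exp ε0) δ0 hg0 hg1 (h0 l0 l0' hψ0)
  -- step C : ∑ w' g ≤ e^{ε1} ∑ w' q'
  have stepC : ∑ y0, w' y0 * g y0 ≤ Real.exp ε1 * ∑ y0, w' y0 * q' y0 := by
    rw [Finset.mul_sum]
    refine Finset.sum_le_sum fun y0 _ => ?_
    have hmin : g y0 ≤ Real.exp ε1 * q' y0 := min_le_right _ _
    calc w' y0 * g y0 ≤ w' y0 * (Real.exp ε1 * q' y0) :=
          mul_le_mul_of_nonneg_left hmin (hw'D.1 y0)
      _ = Real.exp ε1 * (w' y0 * q' y0) := by ring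
  have hfin : Real.exp ε0 * ∑ y0, w' y0 * g y0
      ≤ Real.exp (ε0 + ε1) * ∑ y0, w' y0 * q' y0 := by
    rw [Real.exp_add]
    calc Real.exp ε0 * ∑ y0, w' y0 * g y0
        ≤ Real.exp ε0 * (Real.exp ε1 * ∑ y0, w' y0 * q' y0) :=
          mul_le_mul_of_nonneg_left stepC (Real.exp_nonneg ε0)
      _ = Real.exp ε0 * Real.exp ε1 * ∑ y0, w' y0 * q' y0 := by ring
  linarith
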